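/- Let X be a Banach algebra with unit and let A ∈ X satisfy ‖A‖ ≤ K < 1. Then Id + A is invertible with inverse Σ_{n≥0} (−1)^n A^n and ‖(Id+A)^{-1}‖ ≤ 1/(1−K). In particular, if τ is a unital trace with ‖τ‖₁ ≤ 1, V ∈ L, and K(ξ,V) := 4(ξ+1)/(ξ(ξ−1)) + ‖ΠV‖₁ deg(V) ξ^{deg V} < 1, then the fundamental operators Ψ_τ^V = Id + (1/2)Π T̄_τ + P̄^V and Ξ_τ^V = Id + Π T̄_τ + P̄^V are continuous automorphisms of the ξ-completion of B^⊥ with ‖(Ψ_τ^V)^{-1}‖_ξ, ‖(Ξ_τ^V)^{-1}‖_ξ ≤ 1/(1−K(ξ,V)). -/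
import Mathlib

lemma neumann_aux {X : Type*} [NormedRing X] [CompleteSpace X] (h1 : ‖(1:X)‖ ≤ 1)
    (A : X) (K : ℝ) (hAK : ‖A‖ ≤ K) (hK : K < 1) :
    (1 + A) * (∑' n : ℕ, (-1 : X) ^ n * A ^ n) = 1 ∧
    (∑' n : ℕ, (-1 : X) ^ n * A ^ n) * (1 + A) = 1 ∧
    ‖∑' n : ℕ, (-1 : X) ^ n * A ^ n‖ ≤ 1 / (1 - K) := by
  have hK0 : 0 ≤ K := le_trans (norm_nonneg A) hAK
  have hA : ‖-A‖ < 1 := by simpa using hAK.trans_lt hK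
  have hrw : (fun n : ℕ => (-1 : X) ^ n * A ^ n) = fun n : ℕ => (-A) ^ n := by
    funext n; exact (neg_pow A n).symm
  set u := Units.oneSub (-A) hA with hu
  have hval : (u : X) = 1 + A := by simp [hu, Units.oneSub]
  have hinv : ((u⁻¹ : Xˣ) : X) = ∑' n : ℕ, (-1 : X) ^ n * A ^ n := by
    rw [hrw]; rfl
  have hbound : ∀ n : ℕ, ‖(-A) ^ n‖ ≤ K ^ n := by
    intro n
    cases n with
    | zero => simpa using h1
    | succ m =>
        refine (norm_pow_le' (-A) m.succ_pos).trans ?_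
        exact pow_le_pow_left₀ (norm_nonneg _) (by simpa using hAK) _
  refine ⟨?_, ?_, ?_⟩
  · rw [← hval, ← hinv]; exact u.mul_inv
  · rw [← hval, ← hinv]; exact u.inv_mul
  · rw [hrw, one_div]
    exact tsum_of_norm_bounded (hasSum_geometric_of_lt_one hK0 hK) hbound



/-- Neumann series invertibility in a Banach algebra: if `‖A‖ ≤ K < 1` then `1 + A` is invertible
with inverse `Σ (-1)^n A^n` of norm `≤ 1/(1-K)`.  In particular, for bounded operators
`Tb = Π T̄_τ` and `Pb = P̄^V` on the completion `B^⊥_ξ` with `‖Tb‖ < 4(ξ+1)/(ξ(ξ-1))`,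
`‖Pb‖ ≤ ‖ΠV‖₁ deg(V) ξ^{deg V} =: nV`, and `K(ξ,V) = 4(ξ+1)/(ξ(ξ-1)) + nV < 1`, the fundamental
operators `Ψ = Id + (1/2)Tb + Pb` and `Ξ = Id + Tb + Pb` are continuous automorphisms with
inverse norm `≤ 1/(1-K(ξ,V))`. -/
theorem stmt7 {X : Type*} [NormedRing X] [NormOneClass X] [CompleteSpace X]
    {E : Type*} [NormedAddCommGroup E] [NormedSpace ℂ E] [CompleteSpace E]
    (A : X) (K : ℝ) (hAK : ‖A‖ ≤ K) (hK : K < 1)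
    (ξ nV : ℝ) (hξ : 1 < ξ) (hnV : 0 ≤ nV)
    (Tb Pb : E →L[ℂ] E)
    (hTb : ‖Tb‖ < 4 * (ξ + 1) / (ξ * (ξ - 1))) (hPb : ‖Pb‖ ≤ nV)
    (hKV : 4 * (ξ + 1) / (ξ * (ξ - 1)) + nV < 1) :
    ((1 + A) * (∑' n : ℕ, (-1 : X) ^ n * A ^ n) = 1 ∧
      (∑' n : ℕ, (-1 : X) ^ n * A ^ n) * (1 + A) = 1 ∧
      ‖∑' n : ℕ, (-1 : X) ^ n * A ^ n‖ ≤ 1 / (1 - K)) ∧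
    (∀ c : ℝ, c = 1 / 2 ∨ c = 1 →
      ∃ Φinv : E →L[ℂ] E,
        (ContinuousLinearMap.id ℂ E + (c : ℂ) • Tb + Pb).comp Φinv =
            ContinuousLinearMap.id ℂ E ∧
        Φinv.comp (ContinuousLinearMap.id ℂ E + (c : ℂ) • Tb + Pb) =
            ContinuousLinearMap.id ℂ E ∧
        ‖Φinv‖ ≤ 1 / (1 - (4 * (ξ + 1) / (ξ * (ξ - 1)) + nV))) := by

  constructor
  · exact neumann_aux (by simp) A K hAK hK
  · intro c hc
    set T0 : ℝ := 4 * (ξ + 1) / (ξ * (ξ - 1)) with hT0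
    have hc1 : ‖(c : ℂ)‖ ≤ 1 := by
      rw [Complex.norm_real, Real.norm_eq_abs, abs_le]
      rcases hc with h | h <;> rw [h] <;> constructor <;> norm_num
    set B : E →L[ℂ] E := (c : ℂ) • Tb + Pb with hB
    have hs : ‖(c : ℂ) • Tb‖ ≤ ‖Tb‖ := by
      calc ‖(c : ℂ) • Tb‖ ≤ ‖(c : ℂ)‖ * ‖Tb‖ := ContinuousLinearMap.opNorm_smul_le _ _
        _ ≤ 1 * ‖Tb‖ := mul_le_mul_of_nonneg_right hc1 (norm_nonneg _)
        _ = ‖Tb‖ := one_mul _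
    have hBnorm : ‖B‖ ≤ T0 + nV :=
      (norm_add_le _ _).trans (add_le_add (hs.trans hTb.le) hPb)
    obtain ⟨h1, h2, h3⟩ := neumann_aux
      (show ‖(1 : E →L[ℂ] E)‖ ≤ 1 from ContinuousLinearMap.norm_id_le)
      B (T0 + nV) hBnorm hKV
    have heq : ContinuousLinearMap.id ℂ E + (c : ℂ) • Tb + Pb = 1 + B := by
      rw [hB, add_assoc]; rfl
    refine ⟨∑' n : ℕ, (-1 : E →L[ℂ] E) ^ n * B ^ n, ?_, ?_, h3⟩
    · rw [heq]; exact h1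
    · rw [heq]; exact h2
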